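/- arXiv:math/0603628 — 2 statements merged into one kernel-verified Lean document; each statement's English description precedes it below -/
import Mathlib

section
/- Let Ω ⊆ ℝ² be open and f : Ω → ℝ a positive C² function. Suppose W₁, W₂ : Ω → ℝ are C² and satisfy the Vekua system ∂_z̄(W₁ + i W₂) = (f_z̄/f)·(W₁ − i W₂) on Ω (identifying ℝ² with ℂ, ∂_z̄ = ½(∂_x + i∂_y)). Then U := f^{-1}·W₁ satisfies div(f²·∇U) = 0 on Ω. -/
/-- Partial derivative in `x` of a real-valued function on `ℝ²`. -/
noncomputable def pdxR (F : ℝ × ℝ → ℝ) (p : ℝ × ℝ) : ℝ :=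
  deriv (fun t => F (t, p.2)) p.1

/-- Partial derivative in `y` of a real-valued function on `ℝ²`. -/
noncomputable def pdyR (F : ℝ × ℝ → ℝ) (p : ℝ × ℝ) : ℝ :=
  deriv (fun t => F (p.1, t)) p.2

/-- The Laplacian of a real-valued function on `ℝ²`. -/
noncomputable def lapR (F : ℝ × ℝ → ℝ) (p : ℝ × ℝ) : ℝ :=
  pdxR (pdxR F) p + pdyR (pdyR F) p

/-- Partial derivative in `x` of a complex-valued function on `ℝ²`. -/
noncomputable def pdx (F : ℝ × ℝ → ℂ) (p : ℝ × ℝ) : ℂ :=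
  deriv (fun t => F (t, p.2)) p.1

/-- Partial derivative in `y` of a complex-valued function on `ℝ²`. -/
noncomputable def pdy (F : ℝ × ℝ → ℂ) (p : ℝ × ℝ) : ℂ :=
  deriv (fun t => F (p.1, t)) p.2

/-- The Wirtinger operator `∂_z̄ = ½(∂_x + i∂_y)`. -/
noncomputable def dzbar (F : ℝ × ℝ → ℂ) (p : ℝ × ℝ) : ℂ :=
  (pdx F p + Complex.I * pdy F p) / 2

/-- The Wirtinger operator `∂_z = ½(∂_x − i∂_y)`. -/
noncomputable def dz (F : ℝ × ℝ → ℂ) (p : ℝ × ℝ) : ℂ :=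
  (pdx F p - Complex.I * pdy F p) / 2

lemma hasDerivAt_sliceX {F : ℝ × ℝ → ℝ} {p : ℝ × ℝ} (hF : DifferentiableAt ℝ F p) :
    HasDerivAt (fun t => F (t, p.2)) (fderiv ℝ F p (1, 0)) p.1 := by
  have h1 : HasDerivAt (fun t : ℝ => (t, p.2)) ((1 : ℝ), (0 : ℝ)) p.1 :=
    (hasDerivAt_id p.1).prodMk (hasDerivAt_const p.1 p.2)
  exact hF.hasFDerivAt.comp_hasDerivAt p.1 h1

lemma hasDerivAt_sliceY {F : ℝ × ℝ → ℝ} {p : ℝ × ℝ} (hF : DifferentiableAt ℝ F p) :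
    HasDerivAt (fun t => F (p.1, t)) (fderiv ℝ F p (0, 1)) p.2 := by
  have h1 : HasDerivAt (fun t : ℝ => (p.1, t)) ((0 : ℝ), (1 : ℝ)) p.2 :=
    (hasDerivAt_const p.2 p.1).prodMk (hasDerivAt_id p.2)
  exact hF.hasFDerivAt.comp_hasDerivAt p.2 h1

lemma pdxR_eq {F : ℝ × ℝ → ℝ} {p : ℝ × ℝ} (hF : DifferentiableAt ℝ F p) :
    pdxR F p = fderiv ℝ F p (1, 0) := (hasDerivAt_sliceX hF).deriv

lemma pdyR_eq {F : ℝ × ℝ → ℝ} {p : ℝ × ℝ} (hF : DifferentiableAt ℝ F p) :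
    pdyR F p = fderiv ℝ F p (0, 1) := (hasDerivAt_sliceY hF).deriv

lemma sliceX_hasDerivAt {F : ℝ × ℝ → ℝ} {p : ℝ × ℝ} (hF : DifferentiableAt ℝ F p) :
    HasDerivAt (fun t => F (t, p.2)) (pdxR F p) p.1 := by
  rw [pdxR_eq hF]; exact hasDerivAt_sliceX hF

lemma sliceY_hasDerivAt {F : ℝ × ℝ → ℝ} {p : ℝ × ℝ} (hF : DifferentiableAt ℝ F p) :
    HasDerivAt (fun t => F (p.1, t)) (pdyR F p) p.2 := by
  rw [pdyR_eq hF]; exact hasDerivAt_sliceY hF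

lemma pdxR_congr {F G : ℝ × ℝ → ℝ} {p : ℝ × ℝ} (h : F =ᶠ[nhds p] G) :
    pdxR F p = pdxR G p := by
  apply Filter.EventuallyEq.deriv_eq
  have hc : ContinuousAt (fun t : ℝ => (t, p.2)) p.1 :=
    (continuous_id.prodMk continuous_const).continuousAt
  have ht : Filter.Tendsto (fun t : ℝ => (t, p.2)) (nhds p.1) (nhds p) := by
    exact hc.tendsto
  exact h.comp_tendsto ht

lemma pdyR_congr {F G : ℝ × ℝ → ℝ} {p : ℝ × ℝ} (h : F =ᶠ[nhds p] G) :
    pdyR F p = pdyR G p := by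
  apply Filter.EventuallyEq.deriv_eq
  have hc : ContinuousAt (fun t : ℝ => (p.1, t)) p.2 :=
    (continuous_const.prodMk continuous_id).continuousAt
  have ht : Filter.Tendsto (fun t : ℝ => (p.1, t)) (nhds p.2) (nhds p) := by
    exact hc.tendsto
  exact h.comp_tendsto ht

/-- Schwarz: mixed second partials of a `C²` function on an open set commute. -/
lemma mixed_symm {Ω : Set (ℝ × ℝ)} (hΩ : IsOpen Ω) {F : ℝ × ℝ → ℝ}
    (hF : ContDiffOn ℝ 2 F Ω) {p : ℝ × ℝ} (hp : p ∈ Ω) :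
    pdxR (pdyR F) p = pdyR (pdxR F) p := by
  have hΩn : Ω ∈ nhds p := hΩ.mem_nhds hp
  have hdiff : ∀ q ∈ Ω, DifferentiableAt ℝ F q := fun q hq =>
    (hF.differentiableOn two_ne_zero).differentiableAt (hΩ.mem_nhds hq)
  have hD : ContDiffOn ℝ 1 (fderiv ℝ F) Ω := hF.fderiv_of_isOpen hΩ (by norm_num)
  have hDp : DifferentiableAt ℝ (fderiv ℝ F) p :=
    (hD.differentiableOn one_ne_zero).differentiableAt hΩn
  set f'' := fderiv ℝ (fderiv ℝ F) p with hf''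
  have hsymm : ∀ v w, f'' v w = f'' w v := by
    intro v w
    apply second_derivative_symmetric_of_eventually (f := F)
    · filter_upwards [hΩn] with q hq using (hdiff q hq).hasFDerivAt
    · exact hDp.hasFDerivAt
  have key : ∀ v : ℝ × ℝ, pdxR (fun q => fderiv ℝ F q v) p = f'' (1, 0) v ∧
      pdyR (fun q => fderiv ℝ F q v) p = f'' (0, 1) v := by
    intro v
    have hA : HasFDerivAt (fun q => fderiv ℝ F q v)
        ((ContinuousLinearMap.apply ℝ ℝ v).comp f'') p :=
      (ContinuousLinearMap.apply ℝ ℝ v).hasFDerivAt.comp p hDp.hasFDerivAt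
    constructor
    · rw [pdxR_eq hA.differentiableAt, hA.fderiv]; rfl
    · rw [pdyR_eq hA.differentiableAt, hA.fderiv]; rfl
  have hy : pdyR F =ᶠ[nhds p] fun q => fderiv ℝ F q (0, 1) := by
    filter_upwards [hΩn] with q hq using pdyR_eq (hdiff q hq)
  have hx : pdxR F =ᶠ[nhds p] fun q => fderiv ℝ F q (1, 0) := by
    filter_upwards [hΩn] with q hq using pdxR_eq (hdiff q hq)
  rw [pdxR_congr hy, pdyR_congr hx, (key (0,1)).1, (key (1,0)).2, hsymm]

/-- Vekua equation, scalar part and the conductivity equation: if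
`W = W₁ + iW₂` solves `W_z̄ = (f_z̄/f)·W̄` then `U = f⁻¹W₁` solves
`div(f² ∇U) = 0` on `Ω`. -/
theorem vekua_scalar_part_conductivity
    (Ω : Set (ℝ × ℝ)) (hΩ : IsOpen Ω) (f : ℝ × ℝ → ℝ)
    (hf : ContDiffOn ℝ 2 f Ω) (hfpos : ∀ p ∈ Ω, 0 < f p)
    (W₁ W₂ : ℝ × ℝ → ℝ)
    (hW₁ : ContDiffOn ℝ 2 W₁ Ω) (hW₂ : ContDiffOn ℝ 2 W₂ Ω)
    (hVek : ∀ p ∈ Ω,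
      dzbar (fun q => (W₁ q : ℂ) + (W₂ q : ℂ) * Complex.I) p =
        dzbar (fun q => (f q : ℂ)) p / (f p : ℂ) *
          ((W₁ p : ℂ) - (W₂ p : ℂ) * Complex.I)) :
    ∀ p ∈ Ω,
      pdxR (fun q => f q ^ 2 * pdxR (fun w => (f w)⁻¹ * W₁ w) q) p
        + pdyR (fun q => f q ^ 2 * pdyR (fun w => (f w)⁻¹ * W₁ w) q) p = 0 := by
  -- the real/imaginary parts of the Vekua equation, combined with the product
  -- rule, show that the components of `f²∇(f⁻¹W₁)` are `∂_y(fW₂)` and `−∂_x(fW₂)`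
  have key : ∀ q ∈ Ω,
      f q ^ 2 * pdxR (fun w => (f w)⁻¹ * W₁ w) q = pdyR (fun w => f w * W₂ w) q ∧
      f q ^ 2 * pdyR (fun w => (f w)⁻¹ * W₁ w) q = -(pdxR (fun w => f w * W₂ w) q) := by
    intro q hq
    have hfq : DifferentiableAt ℝ f q :=
      (hf.differentiableOn two_ne_zero).differentiableAt (hΩ.mem_nhds hq)
    have hW₁q : DifferentiableAt ℝ W₁ q :=
      (hW₁.differentiableOn two_ne_zero).differentiableAt (hΩ.mem_nhds hq)
    have hW₂q : DifferentiableAt ℝ W₂ q :=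
      (hW₂.differentiableOn two_ne_zero).differentiableAt (hΩ.mem_nhds hq)
    have hfne : f q ≠ 0 := (hfpos q hq).ne'
    -- real/imaginary parts of the Vekua equation
    have ex : pdx (fun w => (W₁ w : ℂ) + (W₂ w : ℂ) * Complex.I) q
        = (pdxR W₁ q : ℂ) + (pdxR W₂ q : ℂ) * Complex.I :=
      (((sliceX_hasDerivAt hW₁q).ofReal_comp).add
        (((sliceX_hasDerivAt hW₂q).ofReal_comp).mul_const Complex.I)).deriv
    have ey : pdy (fun w => (W₁ w : ℂ) + (W₂ w : ℂ) * Complex.I) q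
        = (pdyR W₁ q : ℂ) + (pdyR W₂ q : ℂ) * Complex.I :=
      (((sliceY_hasDerivAt hW₁q).ofReal_comp).add
        (((sliceY_hasDerivAt hW₂q).ofReal_comp).mul_const Complex.I)).deriv
    have efx : pdx (fun w => ((f w : ℂ))) q = (pdxR f q : ℂ) :=
      ((sliceX_hasDerivAt hfq).ofReal_comp).deriv
    have efy : pdy (fun w => ((f w : ℂ))) q = (pdyR f q : ℂ) :=
      ((sliceY_hasDerivAt hfq).ofReal_comp).deriv
    have h := hVek q hq
    rw [dzbar, dzbar, ex, ey, efx, efy] at h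
    have hf0 : (f q : ℂ) ≠ 0 := Complex.ofReal_ne_zero.2 hfne
    field_simp at h
    rw [Complex.ext_iff] at h
    obtain ⟨h1, h2⟩ := h
    simp [Complex.ext_iff] at h1 h2
    have r1 : f q * pdxR W₁ q - pdxR f q * W₁ q = f q * pdyR W₂ q + pdyR f q * W₂ q := by
      nlinarith [h1, h2]
    have r2 : f q * pdyR W₁ q - pdyR f q * W₁ q = -(f q * pdxR W₂ q + pdxR f q * W₂ q) := by
      nlinarith [h1, h2]
    -- product rule computations
    have hUx : pdxR (fun w => (f w)⁻¹ * W₁ w) q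
        = -(pdxR f q) / f q ^ 2 * W₁ q + (f q)⁻¹ * pdxR W₁ q :=
      (((sliceX_hasDerivAt hfq).inv hfne).mul (sliceX_hasDerivAt hW₁q)).deriv
    have hUy : pdyR (fun w => (f w)⁻¹ * W₁ w) q
        = -(pdyR f q) / f q ^ 2 * W₁ q + (f q)⁻¹ * pdyR W₁ q :=
      (((sliceY_hasDerivAt hfq).inv hfne).mul (sliceY_hasDerivAt hW₁q)).deriv
    have hHx : pdxR (fun w => f w * W₂ w) q = pdxR f q * W₂ q + f q * pdxR W₂ q :=
      ((sliceX_hasDerivAt hfq).mul (sliceX_hasDerivAt hW₂q)).deriv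
    have hHy : pdyR (fun w => f w * W₂ w) q = pdyR f q * W₂ q + f q * pdyR W₂ q :=
      ((sliceY_hasDerivAt hfq).mul (sliceY_hasDerivAt hW₂q)).deriv
    constructor
    · rw [hUx, hHy]
      field_simp
      linear_combination r1
    · rw [hUy, hHx]
      field_simp
      linear_combination r2
  intro p hp
  have hΩn : Ω ∈ nhds p := hΩ.mem_nhds hp
  have h1 : (fun q => f q ^ 2 * pdxR (fun w => (f w)⁻¹ * W₁ w) q)
      =ᶠ[nhds p] pdyR (fun w => f w * W₂ w) := by
    filter_upwards [hΩn] with q hq using (key q hq).1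
  have h2 : (fun q => f q ^ 2 * pdyR (fun w => (f w)⁻¹ * W₁ w) q)
      =ᶠ[nhds p] fun q => -(pdxR (fun w => f w * W₂ w) q) := by
    filter_upwards [hΩn] with q hq using (key q hq).2
  rw [pdxR_congr h1, pdyR_congr h2]
  have hneg : pdyR (fun q => -(pdxR (fun w => f w * W₂ w) q)) p
      = -(pdyR (pdxR (fun w => f w * W₂ w)) p) := by
    simp only [pdyR]
    exact deriv.neg
  rw [hneg, mixed_symm hΩ (hf.mul hW₂) hp]
  ring
end

section
/- Let G ⊆ ℝ³ be open and f : G → ℂ a twice continuously differentiable nonvanishing function with Δf = νf on G. Then for every C² scalar function g : G → ℂ, (D + M^{Df/f})(D − M^{Df/f})g = −Δg + νg, where D = i∂_x + j∂_y + k∂_z acts on ℍ(ℂ)-valued functions, M^{Df/f} denotes right multiplication by the purely vectorial quaternion Df/f, and g is regarded as a scalar quaternion-valued function. -/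
open Quaternion

/-- Partial derivatives of complex-valued functions on `ℝ³`. -/
noncomputable def cpd1 (F : ℝ × ℝ × ℝ → ℂ) (p : ℝ × ℝ × ℝ) : ℂ :=
  deriv (fun t => F (t, p.2.1, p.2.2)) p.1

noncomputable def cpd2 (F : ℝ × ℝ × ℝ → ℂ) (p : ℝ × ℝ × ℝ) : ℂ :=
  deriv (fun t => F (p.1, t, p.2.2)) p.2.1

noncomputable def cpd3 (F : ℝ × ℝ × ℝ → ℂ) (p : ℝ × ℝ × ℝ) : ℂ :=
  deriv (fun t => F (p.1, p.2.1, t)) p.2.2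

/-- The Laplacian on `ℝ³` of a complex-valued function. -/
noncomputable def lap3 (F : ℝ × ℝ × ℝ → ℂ) (p : ℝ × ℝ × ℝ) : ℂ :=
  cpd1 (cpd1 F) p + cpd2 (cpd2 F) p + cpd3 (cpd3 F) p

/-- Componentwise partial derivatives of a complex-quaternion–valued function. -/
noncomputable def qpd1 (F : ℝ × ℝ × ℝ → ℍ[ℂ]) (p : ℝ × ℝ × ℝ) : ℍ[ℂ] :=
  ⟨cpd1 (fun q => (F q).re) p, cpd1 (fun q => (F q).imI) p,
    cpd1 (fun q => (F q).imJ) p, cpd1 (fun q => (F q).imK) p⟩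

noncomputable def qpd2 (F : ℝ × ℝ × ℝ → ℍ[ℂ]) (p : ℝ × ℝ × ℝ) : ℍ[ℂ] :=
  ⟨cpd2 (fun q => (F q).re) p, cpd2 (fun q => (F q).imI) p,
    cpd2 (fun q => (F q).imJ) p, cpd2 (fun q => (F q).imK) p⟩

noncomputable def qpd3 (F : ℝ × ℝ × ℝ → ℍ[ℂ]) (p : ℝ × ℝ × ℝ) : ℍ[ℂ] :=
  ⟨cpd3 (fun q => (F q).re) p, cpd3 (fun q => (F q).imI) p,
    cpd3 (fun q => (F q).imJ) p, cpd3 (fun q => (F q).imK) p⟩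

/-- The quaternion imaginary units. -/
def qi : ℍ[ℂ] := ⟨0, 1, 0, 0⟩
def qj : ℍ[ℂ] := ⟨0, 0, 1, 0⟩
def qk : ℍ[ℂ] := ⟨0, 0, 0, 1⟩

/-- The Moisil–Teodorescu (Dirac) operator `D = i∂_x + j∂_y + k∂_z` acting
from the left on complex-quaternion–valued functions. -/
noncomputable def Dq (F : ℝ × ℝ × ℝ → ℍ[ℂ]) (p : ℝ × ℝ × ℝ) : ℍ[ℂ] :=
  qi * qpd1 F p + qj * qpd2 F p + qk * qpd3 F p

/-- Quaternionic conjugation: scalar part minus vector part. -/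
def qconj (a : ℍ[ℂ]) : ℍ[ℂ] := ⟨a.re, -a.imI, -a.imJ, -a.imK⟩

/-- Componentwise `C¹` smoothness on a set for complex-quaternion–valued
functions. -/
def QContDiffOn (n : ℕ) (F : ℝ × ℝ × ℝ → ℍ[ℂ]) (G : Set (ℝ × ℝ × ℝ)) : Prop :=
  ContDiffOn ℝ n (fun q => (F q).re) G ∧ ContDiffOn ℝ n (fun q => (F q).imI) G ∧
    ContDiffOn ℝ n (fun q => (F q).imJ) G ∧ ContDiffOn ℝ n (fun q => (F q).imK) G


section Helpers

abbrev E3 := ℝ × ℝ × ℝ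

private lemma sliceFD1 {F : E3 → ℂ} {p : E3} (h : DifferentiableAt ℝ F p) :
    HasDerivAt (fun t => F (t, p.2.1, p.2.2)) (fderiv ℝ F p (1, 0, 0)) p.1 := by
  have hc : HasDerivAt (fun t : ℝ => ((t, p.2.1, p.2.2) : E3)) ((1 : ℝ), (0 : ℝ), (0 : ℝ)) p.1 :=
    (hasDerivAt_id p.1).prodMk ((hasDerivAt_const _ _).prodMk (hasDerivAt_const _ _))
  exact h.hasFDerivAt.comp_hasDerivAt p.1 hc

private lemma sliceFD2 {F : E3 → ℂ} {p : E3} (h : DifferentiableAt ℝ F p) :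
    HasDerivAt (fun t => F (p.1, t, p.2.2)) (fderiv ℝ F p (0, 1, 0)) p.2.1 := by
  have hc : HasDerivAt (fun t : ℝ => ((p.1, t, p.2.2) : E3)) ((0 : ℝ), (1 : ℝ), (0 : ℝ)) p.2.1 :=
    (hasDerivAt_const _ _).prodMk ((hasDerivAt_id _).prodMk (hasDerivAt_const _ _))
  exact h.hasFDerivAt.comp_hasDerivAt p.2.1 hc

private lemma sliceFD3 {F : E3 → ℂ} {p : E3} (h : DifferentiableAt ℝ F p) :
    HasDerivAt (fun t => F (p.1, p.2.1, t)) (fderiv ℝ F p (0, 0, 1)) p.2.2 := by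
  have hc : HasDerivAt (fun t : ℝ => ((p.1, p.2.1, t) : E3)) ((0 : ℝ), (0 : ℝ), (1 : ℝ)) p.2.2 :=
    (hasDerivAt_const _ _).prodMk ((hasDerivAt_const _ _).prodMk (hasDerivAt_id _))
  exact h.hasFDerivAt.comp_hasDerivAt p.2.2 hc

private lemma cpd1_eq {F : E3 → ℂ} {p : E3} (h : DifferentiableAt ℝ F p) :
    cpd1 F p = fderiv ℝ F p (1, 0, 0) := (sliceFD1 h).deriv

private lemma cpd2_eq {F : E3 → ℂ} {p : E3} (h : DifferentiableAt ℝ F p) :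
    cpd2 F p = fderiv ℝ F p (0, 1, 0) := (sliceFD2 h).deriv

private lemma cpd3_eq {F : E3 → ℂ} {p : E3} (h : DifferentiableAt ℝ F p) :
    cpd3 F p = fderiv ℝ F p (0, 0, 1) := (sliceFD3 h).deriv

private lemma slice1 {F : E3 → ℂ} {p : E3} (h : DifferentiableAt ℝ F p) :
    HasDerivAt (fun t => F (t, p.2.1, p.2.2)) (cpd1 F p) p.1 := by
  rw [cpd1_eq h]; exact sliceFD1 h

private lemma slice2 {F : E3 → ℂ} {p : E3} (h : DifferentiableAt ℝ F p) :
    HasDerivAt (fun t => F (p.1, t, p.2.2)) (cpd2 F p) p.2.1 := by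
  rw [cpd2_eq h]; exact sliceFD2 h

private lemma slice3 {F : E3 → ℂ} {p : E3} (h : DifferentiableAt ℝ F p) :
    HasDerivAt (fun t => F (p.1, p.2.1, t)) (cpd3 F p) p.2.2 := by
  rw [cpd3_eq h]; exact sliceFD3 h

variable {G : Set E3} {F : E3 → ℂ} {p : E3}

private lemma diffAt_of_C2 (hF : ContDiffOn ℝ 2 F G) (hG : IsOpen G) (hp : p ∈ G) :
    DifferentiableAt ℝ F p :=
  (hF.contDiffAt (hG.mem_nhds hp)).differentiableAt (by norm_num)

private lemma hasFDerivAt_cpd1 (hF : ContDiffOn ℝ 2 F G) (hG : IsOpen G) (hp : p ∈ G) :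
    HasFDerivAt (cpd1 F)
      ((ContinuousLinearMap.apply ℝ ℂ ((1, 0, 0) : E3)).comp (fderiv ℝ (fderiv ℝ F) p)) p := by
  have h1 : DifferentiableAt ℝ (fderiv ℝ F) p :=
    ((hF.fderiv_of_isOpen (m := 1) hG (by norm_num)).differentiableOn
      (by norm_num)).differentiableAt (hG.mem_nhds hp)
  have h2 := ((ContinuousLinearMap.apply ℝ ℂ ((1, 0, 0) : E3)).hasFDerivAt).comp p h1.hasFDerivAt
  apply h2.congr_of_eventuallyEq
  filter_upwards [hG.mem_nhds hp] with q hq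
  exact cpd1_eq (diffAt_of_C2 hF hG hq)

private lemma hasFDerivAt_cpd2 (hF : ContDiffOn ℝ 2 F G) (hG : IsOpen G) (hp : p ∈ G) :
    HasFDerivAt (cpd2 F)
      ((ContinuousLinearMap.apply ℝ ℂ ((0, 1, 0) : E3)).comp (fderiv ℝ (fderiv ℝ F) p)) p := by
  have h1 : DifferentiableAt ℝ (fderiv ℝ F) p :=
    ((hF.fderiv_of_isOpen (m := 1) hG (by norm_num)).differentiableOn
      (by norm_num)).differentiableAt (hG.mem_nhds hp)
  have h2 := ((ContinuousLinearMap.apply ℝ ℂ ((0, 1, 0) : E3)).hasFDerivAt).comp p h1.hasFDerivAt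
  apply h2.congr_of_eventuallyEq
  filter_upwards [hG.mem_nhds hp] with q hq
  exact cpd2_eq (diffAt_of_C2 hF hG hq)

private lemma hasFDerivAt_cpd3 (hF : ContDiffOn ℝ 2 F G) (hG : IsOpen G) (hp : p ∈ G) :
    HasFDerivAt (cpd3 F)
      ((ContinuousLinearMap.apply ℝ ℂ ((0, 0, 1) : E3)).comp (fderiv ℝ (fderiv ℝ F) p)) p := by
  have h1 : DifferentiableAt ℝ (fderiv ℝ F) p :=
    ((hF.fderiv_of_isOpen (m := 1) hG (by norm_num)).differentiableOn
      (by norm_num)).differentiableAt (hG.mem_nhds hp)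
  have h2 := ((ContinuousLinearMap.apply ℝ ℂ ((0, 0, 1) : E3)).hasFDerivAt).comp p h1.hasFDerivAt
  apply h2.congr_of_eventuallyEq
  filter_upwards [hG.mem_nhds hp] with q hq
  exact cpd3_eq (diffAt_of_C2 hF hG hq)

private lemma diff_cpd1 (hF : ContDiffOn ℝ 2 F G) (hG : IsOpen G) (hp : p ∈ G) :
    DifferentiableAt ℝ (cpd1 F) p := (hasFDerivAt_cpd1 hF hG hp).differentiableAt
private lemma diff_cpd2 (hF : ContDiffOn ℝ 2 F G) (hG : IsOpen G) (hp : p ∈ G) :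
    DifferentiableAt ℝ (cpd2 F) p := (hasFDerivAt_cpd2 hF hG hp).differentiableAt
private lemma diff_cpd3 (hF : ContDiffOn ℝ 2 F G) (hG : IsOpen G) (hp : p ∈ G) :
    DifferentiableAt ℝ (cpd3 F) p := (hasFDerivAt_cpd3 hF hG hp).differentiableAt

private lemma symm2 (hF : ContDiffOn ℝ 2 F G) (hG : IsOpen G) (hp : p ∈ G) :
    IsSymmSndFDerivAt ℝ F p :=
  (hF.contDiffAt (hG.mem_nhds hp)).isSymmSndFDerivAt (by norm_num)

private lemma clairaut12 (hF : ContDiffOn ℝ 2 F G) (hG : IsOpen G) (hp : p ∈ G) :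
    cpd1 (cpd2 F) p = cpd2 (cpd1 F) p := by
  rw [cpd1_eq (diff_cpd2 hF hG hp), cpd2_eq (diff_cpd1 hF hG hp),
    (hasFDerivAt_cpd2 hF hG hp).fderiv, (hasFDerivAt_cpd1 hF hG hp).fderiv]
  exact symm2 hF hG hp (1,0,0) (0,1,0)

private lemma clairaut13 (hF : ContDiffOn ℝ 2 F G) (hG : IsOpen G) (hp : p ∈ G) :
    cpd1 (cpd3 F) p = cpd3 (cpd1 F) p := by
  rw [cpd1_eq (diff_cpd3 hF hG hp), cpd3_eq (diff_cpd1 hF hG hp),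
    (hasFDerivAt_cpd3 hF hG hp).fderiv, (hasFDerivAt_cpd1 hF hG hp).fderiv]
  exact symm2 hF hG hp (1,0,0) (0,0,1)

private lemma clairaut23 (hF : ContDiffOn ℝ 2 F G) (hG : IsOpen G) (hp : p ∈ G) :
    cpd2 (cpd3 F) p = cpd3 (cpd2 F) p := by
  rw [cpd2_eq (diff_cpd3 hF hG hp), cpd3_eq (diff_cpd2 hF hG hp),
    (hasFDerivAt_cpd3 hF hG hp).fderiv, (hasFDerivAt_cpd2 hF hG hp).fderiv]
  exact symm2 hF hG hp (0,1,0) (0,0,1)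

private lemma deriv_combo {u v w z : ℝ → ℂ} {x : ℝ} {u' v' w' z' : ℂ}
    (hu : HasDerivAt u u' x) (hv : HasDerivAt v v' x) (hw : HasDerivAt w w' x)
    (hz : HasDerivAt z z' x) (h0 : w x ≠ 0) :
    HasDerivAt (fun t => u t - v t * z t / w t)
      (u' - ((v' * z x + v x * z') * w x - v x * z x * w') / w x ^ 2) x :=
  hu.sub ((hv.mul hz).div hw h0)

private noncomputable def av1 (f g : E3 → ℂ) (q : E3) : ℂ := cpd1 g q - g q * cpd1 f q / f q
private noncomputable def av2 (f g : E3 → ℂ) (q : E3) : ℂ := cpd2 g q - g q * cpd2 f q / f q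
private noncomputable def av3 (f g : E3 → ℂ) (q : E3) : ℂ := cpd3 g q - g q * cpd3 f q / f q

private lemma cpd1_zero (p : E3) : cpd1 (fun _ => (0:ℂ)) p = 0 := by simp [cpd1]
private lemma cpd2_zero (p : E3) : cpd2 (fun _ => (0:ℂ)) p = 0 := by simp [cpd2]
private lemma cpd3_zero (p : E3) : cpd3 (fun _ => (0:ℂ)) p = 0 := by simp [cpd3]

private def qmk (a b c d : ℂ) : ℍ[ℂ] := ⟨a, b, c, d⟩
private lemma hmk (a b c d : ℂ) : (⟨a, b, c, d⟩ : ℍ[ℂ]) = qmk a b c d := rfl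
@[simp] private lemma qmk_re (a b c d : ℂ) : (qmk a b c d).re = a := rfl
@[simp] private lemma qmk_imI (a b c d : ℂ) : (qmk a b c d).imI = b := rfl
@[simp] private lemma qmk_imJ (a b c d : ℂ) : (qmk a b c d).imJ = c := rfl
@[simp] private lemma qmk_imK (a b c d : ℂ) : (qmk a b c d).imK = d := rfl

private lemma Dq_scalar (F : E3 → ℂ) :
    Dq (fun w => (F w : ℍ[ℂ])) = fun q => ⟨0, cpd1 F q, cpd2 F q, cpd3 F q⟩ := by
  funext q
  ext <;>
    simp [Dq] <;> simp [qpd1, qpd2, qpd3, qi, qj, qk, cpd1_zero, cpd2_zero, cpd3_zero]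

private lemma Dq_vec (A B C : E3 → ℂ) :
    Dq (fun q => (⟨0, A q, B q, C q⟩ : ℍ[ℂ])) = fun p =>
      ⟨-(cpd1 A p + cpd2 B p + cpd3 C p), cpd2 C p - cpd3 B p,
        cpd3 A p - cpd1 C p, cpd1 B p - cpd2 A p⟩ := by
  funext p
  ext <;>
    simp [Dq] <;> simp [qpd1, qpd2, qpd3, qi, qj, qk, cpd1_zero, cpd2_zero, cpd3_zero] <;>
    ring

end Helpers

/-- 3D quaternionic factorization of the Schrödinger operator: if `f` is a
nonvanishing solution of `Δf = νf` on `G` then for every scalar C² function `g`,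
`(D + M^{Df/f})(D − M^{Df/f})g = −Δg + νg`, where `M^{Df/f}` is right
multiplication by `Df/f`. -/
theorem quaternionic_factorization_3d
    (G : Set (ℝ × ℝ × ℝ)) (hG : IsOpen G) (f ν g : ℝ × ℝ × ℝ → ℂ)
    (hf : ContDiffOn ℝ 2 f G) (hf0 : ∀ p ∈ G, f p ≠ 0)
    (hfe : ∀ p ∈ G, lap3 f p = ν p * f p)
    (hg : ContDiffOn ℝ 2 g G) :
    ∀ p ∈ G,
      Dq (fun q =>
            Dq (fun w => (g w : ℍ[ℂ])) q
              - (g q : ℍ[ℂ]) * ((((f q)⁻¹ : ℂ) : ℍ[ℂ]) * Dq (fun w => (f w : ℍ[ℂ])) q)) p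
        + (Dq (fun w => (g w : ℍ[ℂ])) p
            - (g p : ℍ[ℂ]) * ((((f p)⁻¹ : ℂ) : ℍ[ℂ]) * Dq (fun w => (f w : ℍ[ℂ])) p))
          * ((((f p)⁻¹ : ℂ) : ℍ[ℂ]) * Dq (fun w => (f w : ℍ[ℂ])) p)
        = ((-(lap3 g p) + ν p * g p : ℂ) : ℍ[ℂ]) := by
  intro p hp
  have hPt : ∀ q, Dq (fun w => ((g w : ℂ) : ℍ[ℂ])) q
      - (g q : ℍ[ℂ]) * ((((f q)⁻¹ : ℂ) : ℍ[ℂ]) * Dq (fun w => ((f w : ℂ) : ℍ[ℂ])) q)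
      = (⟨0, av1 f g q, av2 f g q, av3 f g q⟩ : ℍ[ℂ]) := by
    intro q
    simp only [Dq_scalar]
    ext <;> simp [av1, av2, av3, hmk] <;> ring
  have hInner : (fun q => Dq (fun w => ((g w : ℂ) : ℍ[ℂ])) q
      - (g q : ℍ[ℂ]) * ((((f q)⁻¹ : ℂ) : ℍ[ℂ]) * Dq (fun w => ((f w : ℂ) : ℍ[ℂ])) q))
      = fun q => (⟨0, av1 f g q, av2 f g q, av3 f g q⟩ : ℍ[ℂ]) := funext hPt
  have d1a1 : cpd1 (av1 f g) p = cpd1 (cpd1 g) p -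
      ((cpd1 g p * cpd1 f p + g p * cpd1 (cpd1 f) p) * f p -
        g p * cpd1 f p * cpd1 f p) / f p ^ 2 :=
    (deriv_combo (slice1 (diff_cpd1 hg hG hp)) (slice1 (diffAt_of_C2 hg hG hp))
      (slice1 (diffAt_of_C2 hf hG hp)) (slice1 (diff_cpd1 hf hG hp)) (hf0 p hp)).deriv
  have d1a2 : cpd1 (av2 f g) p = cpd1 (cpd2 g) p -
      ((cpd1 g p * cpd2 f p + g p * cpd1 (cpd2 f) p) * f p -
        g p * cpd2 f p * cpd1 f p) / f p ^ 2 :=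
    (deriv_combo (slice1 (diff_cpd2 hg hG hp)) (slice1 (diffAt_of_C2 hg hG hp))
      (slice1 (diffAt_of_C2 hf hG hp)) (slice1 (diff_cpd2 hf hG hp)) (hf0 p hp)).deriv
  have d1a3 : cpd1 (av3 f g) p = cpd1 (cpd3 g) p -
      ((cpd1 g p * cpd3 f p + g p * cpd1 (cpd3 f) p) * f p -
        g p * cpd3 f p * cpd1 f p) / f p ^ 2 :=
    (deriv_combo (slice1 (diff_cpd3 hg hG hp)) (slice1 (diffAt_of_C2 hg hG hp))
      (slice1 (diffAt_of_C2 hf hG hp)) (slice1 (diff_cpd3 hf hG hp)) (hf0 p hp)).deriv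
  have d2a1 : cpd2 (av1 f g) p = cpd2 (cpd1 g) p -
      ((cpd2 g p * cpd1 f p + g p * cpd2 (cpd1 f) p) * f p -
        g p * cpd1 f p * cpd2 f p) / f p ^ 2 :=
    (deriv_combo (slice2 (diff_cpd1 hg hG hp)) (slice2 (diffAt_of_C2 hg hG hp))
      (slice2 (diffAt_of_C2 hf hG hp)) (slice2 (diff_cpd1 hf hG hp)) (hf0 p hp)).deriv
  have d2a2 : cpd2 (av2 f g) p = cpd2 (cpd2 g) p -
      ((cpd2 g p * cpd2 f p + g p * cpd2 (cpd2 f) p) * f p -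
        g p * cpd2 f p * cpd2 f p) / f p ^ 2 :=
    (deriv_combo (slice2 (diff_cpd2 hg hG hp)) (slice2 (diffAt_of_C2 hg hG hp))
      (slice2 (diffAt_of_C2 hf hG hp)) (slice2 (diff_cpd2 hf hG hp)) (hf0 p hp)).deriv
  have d2a3 : cpd2 (av3 f g) p = cpd2 (cpd3 g) p -
      ((cpd2 g p * cpd3 f p + g p * cpd2 (cpd3 f) p) * f p -
        g p * cpd3 f p * cpd2 f p) / f p ^ 2 :=
    (deriv_combo (slice2 (diff_cpd3 hg hG hp)) (slice2 (diffAt_of_C2 hg hG hp))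
      (slice2 (diffAt_of_C2 hf hG hp)) (slice2 (diff_cpd3 hf hG hp)) (hf0 p hp)).deriv
  have d3a1 : cpd3 (av1 f g) p = cpd3 (cpd1 g) p -
      ((cpd3 g p * cpd1 f p + g p * cpd3 (cpd1 f) p) * f p -
        g p * cpd1 f p * cpd3 f p) / f p ^ 2 :=
    (deriv_combo (slice3 (diff_cpd1 hg hG hp)) (slice3 (diffAt_of_C2 hg hG hp))
      (slice3 (diffAt_of_C2 hf hG hp)) (slice3 (diff_cpd1 hf hG hp)) (hf0 p hp)).deriv
  have d3a2 : cpd3 (av2 f g) p = cpd3 (cpd2 g) p -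
      ((cpd3 g p * cpd2 f p + g p * cpd3 (cpd2 f) p) * f p -
        g p * cpd2 f p * cpd3 f p) / f p ^ 2 :=
    (deriv_combo (slice3 (diff_cpd2 hg hG hp)) (slice3 (diffAt_of_C2 hg hG hp))
      (slice3 (diffAt_of_C2 hf hG hp)) (slice3 (diff_cpd2 hf hG hp)) (hf0 p hp)).deriv
  have d3a3 : cpd3 (av3 f g) p = cpd3 (cpd3 g) p -
      ((cpd3 g p * cpd3 f p + g p * cpd3 (cpd3 f) p) * f p -
        g p * cpd3 f p * cpd3 f p) / f p ^ 2 :=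
    (deriv_combo (slice3 (diff_cpd3 hg hG hp)) (slice3 (diffAt_of_C2 hg hG hp))
      (slice3 (diffAt_of_C2 hf hG hp)) (slice3 (diff_cpd3 hf hG hp)) (hf0 p hp)).deriv
  have hsum : cpd1 (cpd1 f) p + cpd2 (cpd2 f) p + cpd3 (cpd3 f) p = ν p * f p := hfe p hp
  have h33 : cpd3 (cpd3 f) p = ν p * f p - cpd1 (cpd1 f) p - cpd2 (cpd2 f) p := by
    linear_combination hsum
  rw [hInner, hPt p, Dq_vec]
  simp only [Dq_scalar]
  have hne := hf0 p hp
  ext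
  · simp only [lap3]
    rw [d1a1, d2a2, d3a3, h33]
    simp [av1, av2, av3, hmk]
    field_simp
    try ring_nf
    try field_simp
    try ring
  · rw [clairaut23 hg hG hp, clairaut23 hf hG hp] at d2a3
    rw [d2a3, d3a2]
    simp [av1, av2, av3, hmk]
    field_simp
    try ring_nf
    try field_simp
    try ring
  · rw [clairaut13 hg hG hp, clairaut13 hf hG hp] at d1a3
    rw [d3a1, d1a3]
    simp [av1, av2, av3, hmk]
    field_simp
    try ring_nf
    try field_simp
    try ring
  · rw [clairaut12 hg hG hp, clairaut12 hf hG hp] at d1a2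
    rw [d1a2, d2a1]
    simp [av1, av2, av3, hmk]
    field_simp
    try ring_nf
    try field_simp
    try ring
end
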